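/- For all b, c ∈ V, the rational Dunkl operator satisfies the cross-relation D_b ∘ x_c − x_c ∘ D_b = (b,c)·id + Σ_{α ∈ R_+} k_α (b,α)(c,α^∨)·s_α as operators on ℂ[V], where x_c also denotes the operator of multiplication by the linear polynomial x_c and α^∨ = 2α/(α,α). -/

import Mathlib

noncomputable section

open scoped RealInnerProductSpace BigOperators

namespace Stmt16

/-- Euclidean space `V = ℝ^n`. -/
abbrev V (n : ℕ) := EuclideanSpace ℝ (Fin n)

/-- Polynomial functions on `V`, in coordinates. -/
abbrev Poly (n : ℕ) := MvPolynomial (Fin n) ℂ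

/-- The linear polynomial `x_b = (b, ·)`. -/
def xpoly (n : ℕ) (b : V n) : Poly n :=
  ∑ i : Fin n, MvPolynomial.C (b i : ℂ) * MvPolynomial.X i

/-- The action of the orthogonal reflection `s_α` on polynomial functions,
`(s_α f)(v) = f(s_α v)`, given by the substitution
`X_i ↦ X_i − (e_i, α^∨)·x_α`. -/
def sAct (n : ℕ) (α : V n) : Poly n →ₐ[ℂ] Poly n :=
  MvPolynomial.aeval fun i : Fin n =>
    MvPolynomial.X i - MvPolynomial.C ((2 * (α i) / ⟪α, α⟫ : ℝ) : ℂ) * xpoly n α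

/-- The directional derivative `∂_b` on polynomials. -/
def der (n : ℕ) (b : V n) (f : Poly n) : Poly n :=
  ∑ i : Fin n, MvPolynomial.C (b i : ℂ) * MvPolynomial.pderiv i f

/-- `IsDunkl Rplus k b Dop` says that `Dop` is the rational Dunkl operator
`D_b f = ∂_b f + Σ_{α ∈ R_+} k_α (b,α)·(f − s_α f)/x_α`
(the quotient `(f − s_α f)/x_α` being encoded by its defining equation). -/
def IsDunkl (n : ℕ) (Rplus : Finset (V n)) (k : V n → ℂ) (b : V n)
    (Dop : Poly n → Poly n) : Prop :=
  ∀ f : Poly n, ∃ g : V n → Poly n,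
    (∀ α ∈ Rplus, xpoly n α * g α = f - sAct n α f) ∧
    Dop f = der n b f + ∑ α ∈ Rplus, (k α * (⟪b, α⟫ : ℂ)) • g α

lemma inner_eq_sum_mul (n : ℕ) (x y : V n) : ⟪x, y⟫ = ∑ i, x i * y i := by
  simp only [PiLp.inner_apply, RCLike.inner_apply, conj_trivial]
  exact Finset.sum_congr rfl fun _ _ => mul_comm _ _

lemma eval_xpoly (n : ℕ) (b v : V n) :
    MvPolynomial.eval (fun i => (v i : ℂ)) (xpoly n b) = (⟪b, v⟫ : ℂ) := by
  simp [xpoly, inner_eq_sum_mul]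

lemma xpoly_ne_zero (n : ℕ) {α : V n} (hα : α ≠ 0) : xpoly n α ≠ 0 := by
  intro h
  have := eval_xpoly n α α
  rw [h, map_zero, eq_comm, Complex.ofReal_eq_zero] at this
  exact hα (inner_self_eq_zero.mp this)

lemma sAct_xpoly (n : ℕ) (α c : V n) :
    sAct n α (xpoly n c) =
      xpoly n c - MvPolynomial.C ((2 * ⟪c, α⟫ / ⟪α, α⟫ : ℝ) : ℂ) * xpoly n α := by
  have coroot : (2 * ⟪c, α⟫ / ⟪α, α⟫ : ℝ) = ∑ i, c i * (2 * α i / ⟪α, α⟫) := by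
    rw [inner_eq_sum_mul, Finset.mul_sum, Finset.sum_div]
    exact Finset.sum_congr rfl fun _ _ => by ring
  rw [coroot, xpoly, map_sum]
  push_cast
  simp only [map_sum, Finset.sum_mul, ← Finset.sum_sub_distrib, map_mul, sAct,
    MvPolynomial.aeval_C, MvPolynomial.aeval_X, MvPolynomial.algebraMap_eq]
  push_cast
  exact Finset.sum_congr rfl fun _ _ => by ring

lemma der_xpoly (n : ℕ) (b c : V n) :
    der n b (xpoly n c) = MvPolynomial.C ((⟪b, c⟫ : ℝ) : ℂ) := by
  simp [der, xpoly, inner_eq_sum_mul, MvPolynomial.pderiv_X, Pi.single_apply, mul_comm]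

lemma der_mul (n : ℕ) (b : V n) (p q : Poly n) :
    der n b (p * q) = der n b p * q + p * der n b q := by
  simp only [der, MvPolynomial.pderiv_mul, mul_add, Finset.sum_add_distrib,
    Finset.mul_sum, Finset.sum_mul, mul_left_comm, mul_assoc]

/-- Dividing `x_c f − s_α(x_c f) = x_c (f − s_α f) + (c, α^∨) x_α s_α f` by `x_α`. -/
lemma divided_difference_xpoly_mul (n : ℕ) {α : V n} (hα : α ≠ 0) (c : V n)
    {f g g' : Poly n} (hg : xpoly n α * g = f - sAct n α f)
    (hg' : xpoly n α * g' = xpoly n c * f - sAct n α (xpoly n c * f)) :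
    g' = xpoly n c * g + ((2 * ⟪c, α⟫ / ⟪α, α⟫ : ℝ) : ℂ) • sAct n α f := by
  apply mul_left_cancel₀ (xpoly_ne_zero n hα)
  rw [hg', map_mul, sAct_xpoly, MvPolynomial.smul_eq_C_mul]
  linear_combination (-xpoly n c) * hg

theorem stmt_16_general (n : ℕ) (R Rplus : Finset (V n))
    (hne : ∀ α ∈ R, α ≠ (0 : V n))
    (hsub : Rplus ⊆ R)
    (k : V n → ℂ)
    (b c : V n) (Db : Poly n → Poly n) (hDb : IsDunkl n Rplus k b Db) :
    ∀ f : Poly n,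
      Db (xpoly n c * f) - xpoly n c * Db f =
        (⟪b, c⟫ : ℂ) • f +
          ∑ α ∈ Rplus,
            (k α * (⟪b, α⟫ : ℂ) * ((2 * ⟪c, α⟫ / ⟪α, α⟫ : ℝ) : ℂ)) • sAct n α f := by
  intro f
  obtain ⟨g, hg, hDf⟩ := hDb f
  obtain ⟨g', hg', hDxf⟩ := hDb (xpoly n c * f)
  have hg'_eq : ∀ α ∈ Rplus,
      g' α = xpoly n c * g α + ((2 * ⟪c, α⟫ / ⟪α, α⟫ : ℝ) : ℂ) • sAct n α f :=
    fun α hα => divided_difference_xpoly_mul n (hne α (hsub hα)) c (hg α hα) (hg' α hα)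
  rw [hDxf, hDf, der_mul, der_xpoly, Finset.sum_congr rfl fun α hα => by rw [hg'_eq α hα]]
  simp only [smul_add, smul_smul, Finset.sum_add_distrib, ← mul_smul_comm, ← Finset.mul_sum]
  rw [MvPolynomial.smul_eq_C_mul]
  ring

/-- the rational Dunkl operators satisfy the cross-relation
`D_b ∘ x_c − x_c ∘ D_b = (b,c)·id + Σ_{α ∈ R_+} k_α (b,α)(c,α^∨)·s_α` on `ℂ[V]`. -/
theorem stmt_16 (n : ℕ) (R Rplus : Finset (V n))
    (hne : ∀ α ∈ R, α ≠ (0 : V n))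
    (hrefl : ∀ α ∈ R, ∀ β ∈ R, β - (2 * ⟪β, α⟫ / ⟪α, α⟫) • α ∈ R)
    (hsub : Rplus ⊆ R)
    (hpos : ∀ α ∈ R, α ∈ Rplus ∨ -α ∈ Rplus)
    (hdisj : ∀ α ∈ Rplus, -α ∉ Rplus)
    (k : V n → ℂ)
    (hk : ∀ α ∈ R, ∀ β ∈ R, k (β - (2 * ⟪β, α⟫ / ⟪α, α⟫) • α) = k β)
    (b c : V n) (Db : Poly n → Poly n) (hDb : IsDunkl n Rplus k b Db) :
    ∀ f : Poly n,
      Db (xpoly n c * f) - xpoly n c * Db f =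
        (⟪b, c⟫ : ℂ) • f +
          ∑ α ∈ Rplus,
            (k α * (⟪b, α⟫ : ℂ) * ((2 * ⟪c, α⟫ / ⟪α, α⟫ : ℝ) : ℂ)) • sAct n α f :=
  stmt_16_general n R Rplus hne hsub k b c Db hDb

end Stmt16
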